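/- arXiv:0805.0389 — 4 statements merged into one kernel-verified Lean document; each statement's English description precedes it below -/
import Mathlib

section
/- Let f : ℝ^m → ℝ be a function, P ⊆ ℝ^m, and suppose d is a subgradient of f at x ∈ P. Suppose ĥ ∈ ℝ^m satisfies ĥ_i ∈ [d_i − ω w_i − ξ/(2m), d_i + ω w_i + ξ/(2m)] for all i, where w ∈ ℝ₊^m is a fixed nonnegative vector, ω, ξ ≥ 0, and suppose that for every x ∈ P we have x ≥ 0, x_i ≤ 1 for all i, and f(x) ≥ w · x. Then ĥ is an (ω, ξ)-subgradient of f at x, i.e., for every y ∈ P, f(y) − f(x) ≥ ĥ · (y − x) − ω f(y) − ω f(x) − ξ. -/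
/-!
For `xᵢ, yᵢ ∈ [0,1]` we have `|yᵢ - xᵢ| ≤ min 1 (xᵢ + yᵢ)`, so the coordinate error
`(ĥᵢ - dᵢ)(yᵢ - xᵢ)` is at most `ω wᵢ (xᵢ + yᵢ) + ξ/(2m)`. Summing, the total error is at most
`ω (w · x) + ω (w · y) + ξ/2`, and `w · z ≤ f z` on `P` turns this into `ω f x + ω f y + ξ`.
-/

open Finset Set

lemma mul_sub_le_of_abs_le {e a δ s t : ℝ} (he : |e| ≤ a + δ) (ha : 0 ≤ a) (hδ : 0 ≤ δ)
    (hs : s ∈ Icc (0 : ℝ) 1) (ht : t ∈ Icc (0 : ℝ) 1) :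
    e * (t - s) ≤ a * (s + t) + δ := by
  have hdist : |t - s| ≤ 1 := abs_sub_le_of_nonneg_of_le ht.1 ht.2 hs.1 hs.2
  have hdist' : |t - s| ≤ s + t := abs_le.2 ⟨by linarith [ht.1], by linarith [hs.1]⟩
  calc e * (t - s) ≤ |e| * |t - s| := by rw [← abs_mul]; exact le_abs_self _
    _ ≤ (a + δ) * |t - s| := mul_le_mul_of_nonneg_right he (abs_nonneg _)
    _ = a * |t - s| + δ * |t - s| := add_mul _ _ _
    _ ≤ a * (s + t) + δ * 1 :=
        add_le_add (mul_le_mul_of_nonneg_left hdist' ha) (mul_le_mul_of_nonneg_left hdist hδ)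
    _ = a * (s + t) + δ := by rw [mul_one]

lemma sum_mul_sub_le_of_abs_le {ι : Type*} [Fintype ι] {e a x y : ι → ℝ} {δ : ℝ}
    (he : ∀ i, |e i| ≤ a i + δ) (ha : ∀ i, 0 ≤ a i) (hδ : 0 ≤ δ)
    (hx : ∀ i, x i ∈ Icc (0 : ℝ) 1) (hy : ∀ i, y i ∈ Icc (0 : ℝ) 1) :
    ∑ i, e i * (y i - x i) ≤ ∑ i, a i * x i + ∑ i, a i * y i + Fintype.card ι * δ := by
  calc ∑ i, e i * (y i - x i) ≤ ∑ i, (a i * (x i + y i) + δ) :=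
        sum_le_sum fun i _ => mul_sub_le_of_abs_le (he i) (ha i) hδ (hx i) (hy i)
    _ = ∑ i, a i * x i + ∑ i, a i * y i + Fintype.card ι * δ := by
        simp only [mul_add, sum_add_distrib, sum_const, card_univ, nsmul_eq_mul]

theorem sub_ge_of_abs_sub_subgradient_le {ι : Type*} [Fintype ι] {f : (ι → ℝ) → ℝ}
    {x y d dhat w : ι → ℝ} {ω δ : ℝ} (hω : 0 ≤ ω) (hδ : 0 ≤ δ) (hw : ∀ i, 0 ≤ w i)
    (hd : ∀ v, ∑ i, d i * (v i - x i) ≤ f v - f x)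
    (hdhat : ∀ i, |dhat i - d i| ≤ ω * w i + δ)
    (hx : ∀ i, x i ∈ Icc (0 : ℝ) 1) (hy : ∀ i, y i ∈ Icc (0 : ℝ) 1)
    (hwx : ∑ i, w i * x i ≤ f x) (hwy : ∑ i, w i * y i ≤ f y) :
    ∑ i, dhat i * (y i - x i) - ω * f y - ω * f x - Fintype.card ι * δ ≤ f y - f x := by
  have hsplit : ∑ i, dhat i * (y i - x i)
      = ∑ i, d i * (y i - x i) + ∑ i, (dhat i - d i) * (y i - x i) := by
    rw [← sum_add_distrib]
    exact sum_congr rfl fun i _ => by ring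
  have herr := sum_mul_sub_le_of_abs_le hdhat (fun i => mul_nonneg hω (hw i)) hδ hx hy
  simp only [mul_assoc, ← mul_sum] at herr
  linarith [hd y, mul_le_mul_of_nonneg_left hwx hω, mul_le_mul_of_nonneg_left hwy hω]

theorem stmt1_general {m : ℕ} (f : (Fin m → ℝ) → ℝ) (P : Set (Fin m → ℝ))
    (x : Fin m → ℝ) (hx : x ∈ P) (d dhat w : Fin m → ℝ) (ω ξ : ℝ)
    (hω : 0 ≤ ω) (hξ : 0 ≤ ξ) (hw : ∀ i, 0 ≤ w i)
    (hd : ∀ v, f v - f x ≥ ∑ i, d i * (v i - x i))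
    (hdhat : ∀ i, d i - ω * w i - ξ / (2 * m) ≤ dhat i ∧
      dhat i ≤ d i + ω * w i + ξ / (2 * m))
    (hP : ∀ z ∈ P, (∀ i, 0 ≤ z i ∧ z i ≤ 1) ∧ (∑ i, w i * z i) ≤ f z) :
    ∀ y ∈ P, f y - f x ≥ (∑ i, dhat i * (y i - x i)) - ω * f y - ω * f x - ξ := by
  intro y hy
  obtain ⟨hx01, hwx⟩ := hP x hx
  obtain ⟨hy01, hwy⟩ := hP y hy
  have hdhat' (i : Fin m) : |dhat i - d i| ≤ ω * w i + ξ / (2 * m) :=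
    abs_sub_le_iff.2 ⟨by linarith [hdhat i], by linarith [hdhat i]⟩
  have hslack : (m : ℝ) * (ξ / (2 * m)) ≤ ξ :=
    calc (m : ℝ) * (ξ / (2 * m)) = ξ / 2 * (m / m) := by ring
      _ ≤ ξ / 2 * 1 := mul_le_mul_of_nonneg_left (div_self_le_one _) (by positivity)
      _ ≤ ξ := by linarith
  have h := sub_ge_of_abs_sub_subgradient_le hω (by positivity) hw hd hdhat' hx01 hy01 hwx hwy
  rw [Fintype.card_fin] at h
  linarith

/-- If `d` is a subgradient of `f` at `x ∈ P`, `ĥ` approximates `d` componentwise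
within `ω wᵢ + ξ/(2m)`, and on `P` points lie in `[0,1]^m` with `f(x) ≥ w · x`,
then `ĥ` is an `(ω, ξ)`-subgradient of `f` at `x`. -/
theorem stmt1 {m : ℕ} (hm : 0 < m) (f : (Fin m → ℝ) → ℝ) (P : Set (Fin m → ℝ))
    (x : Fin m → ℝ) (hx : x ∈ P) (d dhat w : Fin m → ℝ) (ω ξ : ℝ)
    (hω : 0 ≤ ω) (hξ : 0 ≤ ξ) (hw : ∀ i, 0 ≤ w i)
    (hd : ∀ v, f v - f x ≥ ∑ i, d i * (v i - x i))
    (hdhat : ∀ i, d i - ω * w i - ξ / (2 * m) ≤ dhat i ∧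
      dhat i ≤ d i + ω * w i + ξ / (2 * m))
    (hP : ∀ z ∈ P, (∀ i, 0 ≤ z i ∧ z i ≤ 1) ∧ (∑ i, w i * z i) ≤ f z) :
    ∀ y ∈ P, f y - f x ≥ (∑ i, dhat i * (y i - x i)) - ω * f y - ω * f x - ξ :=
  stmt1_general f P x hx d dhat w ω ξ hω hξ hw hd hdhat hP
end

section
/- Fix ϱ ∈ (0, 1/4) and δ ∈ (0, 1/2). Let N < ln(1/δ − 1)/(4ϱ). Then there is no (possibly randomized) decision procedure using at most N independent tosses of a coin with unknown bias q that, for every q ∈ [0,1], outputs 'q ≤ ϱ' with probability at least 1 − δ whenever q ≤ ϱ and outputs 'q > 2ϱ' with probability at least 1 − δ whenever q > 2ϱ. In particular, the key inequality holds: for any q₀ > 2ϱ with q₀ < 1/4 sufficiently close to 2ϱ, (1 − 2ϱ)^N > δ/(1−δ), so any procedure correct on q = 0 with probability ≥ 1 − δ must output 'q ≤ ϱ' on seeing N tails, and hence errs with probability > δ on bias q₀. -/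
/-!
Under bias `0` the only outcome is the all-tails sequence, so a correct procedure answers
"q ≤ ϱ" on it with probability at least `1 - δ`. Under any bias `q` that sequence has
probability `(1 - q)^N`. Since `1 - 2ϱ ≥ exp (-4ϱ)`, the bound on `N` gives
`(1 - 2ϱ)^N > δ / (1 - δ)`, and by continuity this persists at some `q₀` slightly above `2ϱ`;
there the procedure answers "q ≤ ϱ" with probability more than `(1 - δ) · δ / (1 - δ) = δ`.
-/

open Real Set Filter Topology

lemma Real.exp_neg_two_mul_le_one_sub {x : ℝ} (hx₀ : 0 ≤ x) (hx₁ : x ≤ 1 / 2) :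
    exp (-(2 * x)) ≤ 1 - x := by
  have hpos : 0 < 1 + 2 * x := by linarith
  calc exp (-(2 * x)) = (exp (2 * x))⁻¹ := exp_neg _
    _ ≤ (1 + 2 * x)⁻¹ := inv_anti₀ hpos (by linarith [add_one_le_exp (2 * x)])
    _ ≤ 1 - x := by rw [inv_le_iff_one_le_mul₀' hpos]; nlinarith

lemma div_one_sub_lt_one_sub_two_mul_pow {ϱ δ : ℝ} {N : ℕ} (hϱ₀ : 0 < ϱ) (hϱ₁ : ϱ ≤ 1 / 4)
    (hδ₀ : 0 < δ) (hδ₁ : δ < 1) (hN : (N : ℝ) < log (1 / δ - 1) / (4 * ϱ)) :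
    δ / (1 - δ) < (1 - 2 * ϱ) ^ N := by
  have hpos : 0 < 1 / δ - 1 := by rw [sub_pos, lt_div_iff₀ hδ₀]; linarith
  have hlog : N * (4 * ϱ) < log (1 / δ - 1) := (lt_div_iff₀ (by positivity)).mp hN
  calc δ / (1 - δ) = exp (-log (1 / δ - 1)) := by
        rw [exp_neg, exp_log hpos]; field_simp
    _ < exp (-(2 * (2 * ϱ))) ^ N := by
        rw [← exp_nat_mul, exp_lt_exp]; linarith
    _ ≤ (1 - 2 * ϱ) ^ N := by
        gcongr
        exact exp_neg_two_mul_le_one_sub (by linarith) (by linarith)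

lemma exists_mem_Ioo_lt_one_sub_pow {a b c : ℝ} (hab : a < b) (N : ℕ) (hc : c < (1 - a) ^ N) :
    ∃ q ∈ Ioo a b, c < (1 - q) ^ N := by
  have hcont : Tendsto (fun q : ℝ => (1 - q) ^ N) (𝓝[>] a) (𝓝 ((1 - a) ^ N)) :=
    ((continuous_const.sub continuous_id).pow N).continuousWithinAt
  obtain ⟨q, ⟨hqc, hqb⟩, hqa⟩ := ((hcont.eventually_const_lt hc).and
    (nhdsWithin_le_nhds (eventually_lt_nhds hab))).and self_mem_nhdsWithin |>.exists
  exact ⟨q, ⟨hqa, hqb⟩, hqc⟩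

section acceptProb

variable {ι : Type*} [Fintype ι] [DecidableEq ι]

def acceptProb (D : (ι → Bool) → ℝ) (q : ℝ) : ℝ :=
  ∑ ω, (∏ i, if ω i then q else 1 - q) * D ω

lemma acceptProb_zero (D : (ι → Bool) → ℝ) : acceptProb D 0 = D (fun _ => false) := by
  rw [acceptProb, Finset.sum_eq_single (fun _ => false)]
  · simp
  · intro ω _ hω
    obtain ⟨i, hi⟩ : ∃ i, ω i = true := by
      by_contra! h
      exact hω (funext fun i => by simpa using h i)
    rw [Finset.prod_eq_zero (Finset.mem_univ i) (by simp [hi]), zero_mul]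
  · simp

lemma one_sub_pow_mul_le_acceptProb {D : (ι → Bool) → ℝ} (hD : ∀ ω, 0 ≤ D ω) {q : ℝ}
    (hq : q ∈ Icc 0 1) :
    (1 - q) ^ Fintype.card ι * D (fun _ => false) ≤ acceptProb D q := by
  have hterm : ∀ ω, 0 ≤ (∏ i, if ω i then q else 1 - q) * D ω := fun ω =>
    mul_nonneg (Finset.prod_nonneg fun i _ => by split <;> linarith [hq.1, hq.2]) (hD ω)
  rw [acceptProb]
  simpa using Finset.single_le_sum (fun ω _ => hterm ω) (Finset.mem_univ (fun _ => false))

end acceptProb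

open Classical in
/-- Sampling lower bound for distinguishing a coin of bias `q ≤ ϱ` from one of bias
`q > 2ϱ`: no (possibly randomized) procedure using `N < ln(1/δ − 1)/(4ϱ)` tosses can
be correct with probability at least `1 − δ` on every bias `q ∈ [0,1]`.  A procedure
is modelled by the probability `D ω ∈ [0,1]` of answering "q ≤ ϱ" on toss-sequence
`ω`; the probability of answering "q ≤ ϱ" under bias `q` is
`∑ ω, (∏ i, if ω i then q else 1 − q) * D ω`. -/
theorem stmt2 (ϱ δ : ℝ) (hϱ : ϱ ∈ Set.Ioo (0 : ℝ) (1/4))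
    (hδ : δ ∈ Set.Ioo (0 : ℝ) (1/2))
    (N : ℕ) (hN : (N : ℝ) < Real.log (1/δ - 1) / (4 * ϱ)) :
    ¬ ∃ D : (Fin N → Bool) → ℝ,
      (∀ ω, 0 ≤ D ω ∧ D ω ≤ 1) ∧
      ∀ q ∈ Set.Icc (0 : ℝ) 1,
        (q ≤ ϱ →
          (1 - δ) ≤ ∑ ω : Fin N → Bool, (∏ i, if ω i then q else 1 - q) * D ω) ∧
        (2 * ϱ < q →
          (∑ ω : Fin N → Bool, (∏ i, if ω i then q else 1 - q) * D ω) ≤ δ) := by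
  obtain ⟨hϱ₀, hϱ₁⟩ := hϱ
  obtain ⟨hδ₀, hδ₁⟩ := hδ
  rintro ⟨D, hD, hcorrect⟩
  have hkey := div_one_sub_lt_one_sub_two_mul_pow hϱ₀ hϱ₁.le hδ₀ (by linarith) hN
  obtain ⟨q₀, ⟨hq₀ϱ, hq₀₁⟩, hq₀⟩ :=
    exists_mem_Ioo_lt_one_sub_pow (by linarith : 2 * ϱ < 1) N hkey
  have hall_tails : 1 - δ ≤ D (fun _ => false) := by
    have h := (hcorrect 0 ⟨le_rfl, zero_le_one⟩).1 hϱ₀.le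
    rwa [← acceptProb, acceptProb_zero] at h
  have hq₀_accept : acceptProb D q₀ ≤ δ := (hcorrect q₀ ⟨by linarith, hq₀₁.le⟩).2 hq₀ϱ
  have hlower := one_sub_pow_mul_le_acceptProb (fun ω => (hD ω).1) ⟨by linarith, hq₀₁.le⟩
  rw [Fintype.card_fin] at hlower
  rw [div_lt_iff₀ (by linarith)] at hq₀
  exact (calc δ < (1 - q₀) ^ N * (1 - δ) := hq₀
    _ ≤ (1 - q₀) ^ N * D (fun _ => false) := by gcongr
    _ ≤ acceptProb D q₀ := hlower
    _ ≤ δ := hq₀_accept).false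
end

section
/- In the set cover setting, let f_A be as above and suppose (x, y_A, z_A, r_A) are nonnegative vectors satisfying: Σ_{S ∋ e}(x_S + y_{A,S}) + r_A ≥ 1 for all e ∈ A; Σ_{S ∋ e}(x_S + y_{A,S} + z_{A,S}) ≥ 1 for all e ∈ A; and Σ_S w^A_S y_{A,S} ≤ B. Fix ε > 0 and set x̂ = (1 + 1/ε)·x. Then: (a) f_A(x̂) ≤ Σ_S w^A_S (y_{A,S} + z_{A,S}); and (b) if r_A < 1/(1+ε), then f_A(x̂) ≤ (1 + 1/ε)·B. -/
/-!
Both bounds follow by exhibiting a feasible solution of the covering LP defining `f_A(x̂)`: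
`y_A + z_A` for (a), since `x̂ ≥ x`; and `(1 + 1/ε)·y_A` for (b), since scaling the first
covering constraint by `1 + 1/ε` turns its right-hand side `1 - r_A` into at least `1`.
-/

open Finset

lemma one_le_one_add_one_div_mul_one_sub {ε r : ℝ} (hε : 0 < ε) (hr : r ≤ 1 / (1 + ε)) :
    1 ≤ (1 + 1 / ε) * (1 - r) := by
  have hscale : (1 + 1 / ε) * (1 - 1 / (1 + ε)) = 1 := by field_simp; ring
  calc 1 = (1 + 1 / ε) * (1 - 1 / (1 + ε)) := hscale.symm
    _ ≤ (1 + 1 / ε) * (1 - r) := by gcongr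

section ResidualCover

variable {U 𝒮 : Type*} [Fintype 𝒮] (Sset : 𝒮 → Set U)

open Classical in
noncomputable def coverage (y : 𝒮 → ℝ) (e : U) : ℝ :=
  ∑ S ∈ univ.filter (fun S => e ∈ Sset S), y S

variable {Sset}

lemma coverage_add (y z : 𝒮 → ℝ) (e : U) :
    coverage Sset (fun S => y S + z S) e = coverage Sset y e + coverage Sset z e :=
  sum_add_distrib

lemma coverage_const_mul (c : ℝ) (y : 𝒮 → ℝ) (e : U) :
    coverage Sset (fun S => c * y S) e = c * coverage Sset y e :=
  (mul_sum _ _ _).symm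

lemma coverage_mono {y z : 𝒮 → ℝ} (hyz : ∀ S, y S ≤ z S) (e : U) :
    coverage Sset y e ≤ coverage Sset z e :=
  sum_le_sum fun S _ => hyz S

variable (Sset) in
/-- The objective values of the feasible solutions of the covering LP defining `f_A(x)`. -/
def residualCoverCosts (A : Set U) (w x : 𝒮 → ℝ) : Set ℝ :=
  {c | ∃ y : 𝒮 → ℝ, (∀ S, 0 ≤ y S) ∧
    (∀ e ∈ A, 1 - coverage Sset x e ≤ coverage Sset y e) ∧ c = ∑ S, w S * y S}

lemma sInf_residualCoverCosts_le {A : Set U} {w x y : 𝒮 → ℝ} (hw : ∀ S, 0 ≤ w S)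
    (hy : ∀ S, 0 ≤ y S) (hcov : ∀ e ∈ A, 1 ≤ coverage Sset (fun S => x S + y S) e) :
    sInf (residualCoverCosts Sset A w x) ≤ ∑ S, w S * y S := by
  have hbdd : BddBelow (residualCoverCosts Sset A w x) := by
    refine ⟨0, ?_⟩
    rintro c ⟨y, hy, -, rfl⟩
    exact sum_nonneg fun S _ => mul_nonneg (hw S) (hy S)
  refine csInf_le hbdd ⟨y, hy, fun e he => ?_, rfl⟩
  linarith [hcov e he, coverage_add (Sset := Sset) x y e]

end ResidualCover

open Classical in
theorem stmt7_general {U 𝒮 : Type*} [Fintype 𝒮]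
    (Sset : 𝒮 → Set U) (A : Set U) (w : 𝒮 → ℝ) (hw : ∀ S, 0 ≤ w S)
    (B ε : ℝ) (hε : 0 < ε)
    (fA : (𝒮 → ℝ) → ℝ)
    (hfA : ∀ x, fA x = sInf {c : ℝ | ∃ y : 𝒮 → ℝ, (∀ S, 0 ≤ y S) ∧
      (∀ e ∈ A, (1 - ∑ S ∈ Finset.univ.filter (fun S => e ∈ Sset S), x S) ≤
        ∑ S ∈ Finset.univ.filter (fun S => e ∈ Sset S), y S) ∧
      c = ∑ S, w S * y S})
    (x yA zA : 𝒮 → ℝ) (rA : ℝ)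
    (hx : ∀ S, 0 ≤ x S) (hy : ∀ S, 0 ≤ yA S) (hz : ∀ S, 0 ≤ zA S)
    (hcov1 : ∀ e ∈ A,
      1 ≤ (∑ S ∈ Finset.univ.filter (fun S => e ∈ Sset S), (x S + yA S)) + rA)
    (hcov2 : ∀ e ∈ A,
      1 ≤ ∑ S ∈ Finset.univ.filter (fun S => e ∈ Sset S), (x S + yA S + zA S))
    (hbudget : ∑ S, w S * yA S ≤ B) :
    fA (fun S => (1 + 1/ε) * x S) ≤ ∑ S, w S * (yA S + zA S) ∧
    (rA < 1 / (1 + ε) → fA (fun S => (1 + 1/ε) * x S) ≤ (1 + 1/ε) * B) := by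
  have hf : ∀ x, fA x = sInf (residualCoverCosts Sset A w x) := hfA
  have hc : 1 ≤ 1 + 1 / ε := le_add_of_nonneg_right (by positivity)
  refine ⟨?_, fun hrA => ?_⟩
  · rw [hf]
    refine sInf_residualCoverCosts_le hw (fun S => add_nonneg (hy S) (hz S)) fun e he => ?_
    calc 1 ≤ coverage Sset (fun S => x S + yA S + zA S) e := hcov2 e he
      _ ≤ _ := coverage_mono (fun S => by linarith [le_mul_of_one_le_left (hx S) hc]) e
  · rw [hf]
    calc _ ≤ ∑ S, w S * ((1 + 1 / ε) * yA S) :=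
          sInf_residualCoverCosts_le hw (fun S => mul_nonneg (by positivity) (hy S)) fun e he => ?_
      _ = (1 + 1 / ε) * ∑ S, w S * yA S := by rw [mul_sum]; congr 1; ext S; ring
      _ ≤ (1 + 1 / ε) * B := by gcongr
    calc 1 ≤ (1 + 1 / ε) * (1 - rA) := one_le_one_add_one_div_mul_one_sub hε hrA.le
      _ ≤ (1 + 1 / ε) * coverage Sset (fun S => x S + yA S) e := by
          have hcov : 1 ≤ coverage Sset (fun S => x S + yA S) e + rA := hcov1 e he
          gcongr; linarith
      _ = _ := by rw [← coverage_const_mul]; simp only [mul_add]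

open Classical in
/-- Rounding step for risk-averse budgeted set cover: if `(x, y_A, z_A, r_A)` is a
nonnegative vector satisfying the two covering constraints and the budget constraint,
and `x̂ = (1 + 1/ε)·x`, then (a) `f_A(x̂) ≤ ∑_S w_S (y_{A,S} + z_{A,S})`, and
(b) if `r_A < 1/(1+ε)` then `f_A(x̂) ≤ (1 + 1/ε)·B`. -/
theorem stmt7 {U 𝒮 : Type*} [Fintype U] [Fintype 𝒮]
    (Sset : 𝒮 → Set U) (A : Set U) (w : 𝒮 → ℝ) (hw : ∀ S, 0 ≤ w S)
    (B ε : ℝ) (hB : 0 ≤ B) (hε : 0 < ε)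
    (fA : (𝒮 → ℝ) → ℝ)
    (hfA : ∀ x, fA x = sInf {c : ℝ | ∃ y : 𝒮 → ℝ, (∀ S, 0 ≤ y S) ∧
      (∀ e ∈ A, (1 - ∑ S ∈ Finset.univ.filter (fun S => e ∈ Sset S), x S) ≤
        ∑ S ∈ Finset.univ.filter (fun S => e ∈ Sset S), y S) ∧
      c = ∑ S, w S * y S})
    (x yA zA : 𝒮 → ℝ) (rA : ℝ)
    (hx : ∀ S, 0 ≤ x S) (hy : ∀ S, 0 ≤ yA S) (hz : ∀ S, 0 ≤ zA S) (hr : 0 ≤ rA)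
    (hcov1 : ∀ e ∈ A,
      1 ≤ (∑ S ∈ Finset.univ.filter (fun S => e ∈ Sset S), (x S + yA S)) + rA)
    (hcov2 : ∀ e ∈ A,
      1 ≤ ∑ S ∈ Finset.univ.filter (fun S => e ∈ Sset S), (x S + yA S + zA S))
    (hbudget : ∑ S, w S * yA S ≤ B) :
    fA (fun S => (1 + 1/ε) * x S) ≤ ∑ S, w S * (yA S + zA S) ∧
    (rA < 1 / (1 + ε) → fA (fun S => (1 + 1/ε) * x S) ≤ (1 + 1/ε) * B) :=
  stmt7_general Sset A w hw B ε hε fA hfA x yA zA rA hx hy hz hcov1 hcov2 hbudget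
end

section
/- Let (x*, {(y*_A, z*_A, r*_A)}) be any feasible solution to the risk-averse budgeted set cover LP with Σ_A p_A r*_A ≤ ρ ≤ 1, and suppose scenario costs satisfy w^A_S ≤ λ w^I_S for all A, S with q := Σ_{A ≠ ∅} p_A ≤ 1/λ. Then the solution with first stage x = 0 and, for each nonempty scenario A, second-stage vector z_A = z*_A + y*_A + x*, r_A = 1 (and all-zero for A = ∅) is feasible and has total cost at most that of (x*, {(y*_A, z*_A, r*_A)}). -/
/-!
Buying the first-stage sets `x*` again in every nonempty scenario keeps every element covered,
and with `r_A = 1` exactly on the nonempty scenarios the risk constraint reads `q ≤ ρ`. The extra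
recourse cost is `∑_{A ≠ ∅} p_A w^A · x* ≤ q λ w^I · x* ≤ w^I · x*`, which is the first-stage cost
that is no longer paid.
-/

open Finset

lemma sum_mul_le_mul_sum_of_le_mul {𝒮 : Type*} (s : Finset 𝒮) {w v x : 𝒮 → ℝ} {c : ℝ}
    (hw : ∀ S, w S ≤ c * v S) (hx : ∀ S, 0 ≤ x S) :
    ∑ S ∈ s, w S * x S ≤ c * ∑ S ∈ s, v S * x S := by
  rw [mul_sum]
  refine sum_le_sum fun S _ => ?_
  rw [← mul_assoc]
  exact mul_le_mul_of_nonneg_right (hw S) (hx S)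

lemma sum_mul_ite_le_add_sum_filter_mul {ι : Type*} [Fintype ι] (P : ι → Prop) [DecidablePred P]
    {p f g : ι → ℝ} {C : ℝ} (hp : ∀ a, 0 ≤ p a) (hf : ∀ a, P a → 0 ≤ f a)
    (hg : ∀ a, ¬ P a → g a ≤ f a + C) :
    ∑ a, p a * (if P a then 0 else g a) ≤
      ∑ a, p a * f a + (∑ a ∈ univ.filter (fun a => ¬ P a), p a) * C := by
  rw [sum_mul, sum_filter, ← sum_add_distrib]
  refine sum_le_sum fun a _ => ?_
  split_ifs with h
  · simpa using mul_nonneg (hp a) (hf a h)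
  · simpa [mul_add] using mul_le_mul_of_nonneg_left (hg a h) (hp a)

lemma sum_mul_ite_sum_mul_add_le {ι 𝒮 : Type*} [Fintype ι] [Fintype 𝒮] (P : ι → Prop)
    [DecidablePred P] {p : ι → ℝ} {wI x : 𝒮 → ℝ} {wA c : ι → 𝒮 → ℝ} {lam : ℝ}
    (hp : ∀ a, 0 ≤ p a) (hwI : ∀ S, 0 ≤ wI S) (hwA : ∀ a S, 0 ≤ wA a S)
    (hlw : ∀ a S, wA a S ≤ lam * wI S) (hx : ∀ S, 0 ≤ x S) (hc : ∀ a S, 0 ≤ c a S)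
    (hqlam : (∑ a ∈ univ.filter (fun a => ¬ P a), p a) * lam ≤ 1) :
    ∑ a, p a * (if P a then 0 else ∑ S, wA a S * (c a S + x S)) ≤
      ∑ S, wI S * x S + ∑ a, p a * ∑ S, wA a S * c a S := by
  calc ∑ a, p a * (if P a then 0 else ∑ S, wA a S * (c a S + x S))
      ≤ ∑ a, p a * ∑ S, wA a S * c a S +
          (∑ a ∈ univ.filter (fun a => ¬ P a), p a) * (lam * ∑ S, wI S * x S) := by
        refine sum_mul_ite_le_add_sum_filter_mul P hp
          (fun a _ => sum_nonneg fun S _ => mul_nonneg (hwA a S) (hc a S)) fun a _ => ?_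
        simp only [mul_add, sum_add_distrib]
        exact add_le_add_right (sum_mul_le_mul_sum_of_le_mul _ (hlw a) hx) _
    _ ≤ ∑ S, wI S * x S + ∑ a, p a * ∑ S, wA a S * c a S := by
        rw [← mul_assoc, add_comm]
        gcongr
        exact mul_le_of_le_one_left (sum_nonneg fun S _ => mul_nonneg (hwI S) (hx S)) hqlam

open Classical in
theorem stmt14_general {U 𝒮 ι : Type*} [Fintype 𝒮] [Fintype ι]
    (Sset : 𝒮 → Set U) (elem : ι → Finset U)
    (p : ι → ℝ) (hp0 : ∀ a, 0 ≤ p a)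
    (wI : 𝒮 → ℝ) (wA : ι → 𝒮 → ℝ) (hwI : ∀ S, 0 ≤ wI S) (hwA : ∀ a S, 0 ≤ wA a S)
    (lam B ρ : ℝ) (hlam : 0 < lam) (hB : 0 ≤ B)
    (hlw : ∀ a S, wA a S ≤ lam * wI S)
    (hq : (∑ a ∈ Finset.univ.filter (fun a => elem a ≠ ∅), p a) ≤ min ρ (1/lam))
    (xs : 𝒮 → ℝ) (ys zs : ι → 𝒮 → ℝ)
    (hxs : ∀ S, 0 ≤ xs S) (hys : ∀ a S, 0 ≤ ys a S) (hzs : ∀ a S, 0 ≤ zs a S)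
    (hcov2 : ∀ a, ∀ e ∈ elem a,
      1 ≤ ∑ S ∈ Finset.univ.filter (fun S => e ∈ Sset S), (xs S + ys a S + zs a S)) :
    let x' : 𝒮 → ℝ := fun _ => 0
    let y' : ι → 𝒮 → ℝ := fun _ _ => 0
    let z' : ι → 𝒮 → ℝ := fun a S => if elem a = ∅ then 0 else zs a S + ys a S + xs S
    let r' : ι → ℝ := fun a => if elem a = ∅ then 0 else 1
    (∀ S, 0 ≤ x' S) ∧ (∀ a S, 0 ≤ y' a S) ∧ (∀ a S, 0 ≤ z' a S) ∧ (∀ a, 0 ≤ r' a) ∧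
    (∑ a, p a * r' a ≤ ρ) ∧
    (∀ a, ∀ e ∈ elem a,
      1 ≤ (∑ S ∈ Finset.univ.filter (fun S => e ∈ Sset S), (x' S + y' a S)) + r' a) ∧
    (∀ a, ∀ e ∈ elem a,
      1 ≤ ∑ S ∈ Finset.univ.filter (fun S => e ∈ Sset S), (x' S + y' a S + z' a S)) ∧
    (∀ a, ∑ S, wA a S * y' a S ≤ B) ∧
    ((∑ S, wI S * x' S) + ∑ a, p a * ∑ S, wA a S * (y' a S + z' a S) ≤
      (∑ S, wI S * xs S) + ∑ a, p a * ∑ S, wA a S * (ys a S + zs a S)) := by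
  intro x' y' z' r'
  refine ⟨fun _ => le_rfl, fun _ _ => le_rfl, fun a S => ?_, fun a => ?_, ?_,
    fun a e he => ?_, fun a e he => ?_, fun _ => by simpa [y'] using hB, ?_⟩
  · have := hxs S; have := hys a S; have := hzs a S
    simp only [z']; split_ifs <;> positivity
  · simp only [r']; split_ifs <;> norm_num
  · simp only [r', mul_ite, mul_zero, mul_one, sum_filter, ite_not] at hq ⊢
    exact hq.trans (min_le_left _ _)
  · simp [x', y', r', ne_empty_of_mem he]
  · convert hcov2 a e he using 2 with S
    simp only [x', y', z', if_neg (ne_empty_of_mem he)]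
    ring
  · have hqlam : (∑ a ∈ univ.filter (fun a => elem a ≠ ∅), p a) * lam ≤ 1 :=
      (le_div_iff₀ hlam).1 (hq.trans (min_le_right _ _))
    have hcost : ∀ a, ∑ S, wA a S * (y' a S + z' a S) = if elem a = ∅ then 0 else
        ∑ S, wA a S * (ys a S + zs a S + xs S) := fun a => by
      simp only [y', z', zero_add, mul_ite, mul_zero, sum_ite_irrel, sum_const_zero]
      simp only [add_comm (zs a _)]
    simp only [x', mul_zero, sum_const_zero, zero_add, hcost]
    exact sum_mul_ite_sum_mul_add_le _ hp0 hwI hwA hlw hxs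
      (fun a S => add_nonneg (hys a S) (hzs a S)) hqlam

open Classical in
/-- If `(x*, {(y*_A, z*_A, r*_A)})` is feasible for the risk-averse budgeted set cover
LP with `∑_A p_A r*_A ≤ ρ ≤ 1`, `w^A_S ≤ λ w^I_S`, and the probability `q` of a
nonempty scenario satisfies `q ≤ min ρ (1/λ)`, then the solution with `x = 0`,
`y_A = 0`, and for each nonempty scenario `z_A = z*_A + y*_A + x*`, `r_A = 1`
(all-zero on the empty scenario) is feasible and has total cost at most that of
`(x*, {(y*_A, z*_A, r*_A)})`. -/
theorem stmt14 {U 𝒮 ι : Type*} [Fintype U] [Fintype 𝒮] [Fintype ι]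
    (Sset : 𝒮 → Set U) (elem : ι → Finset U)
    (p : ι → ℝ) (hp0 : ∀ a, 0 ≤ p a) (hp1 : ∑ a, p a = 1)
    (wI : 𝒮 → ℝ) (wA : ι → 𝒮 → ℝ) (hwI : ∀ S, 0 ≤ wI S) (hwA : ∀ a S, 0 ≤ wA a S)
    (lam B ρ : ℝ) (hlam : 0 < lam) (hρ : ρ ≤ 1) (hB : 0 ≤ B)
    (hlw : ∀ a S, wA a S ≤ lam * wI S)
    (hq : (∑ a ∈ Finset.univ.filter (fun a => elem a ≠ ∅), p a) ≤ min ρ (1/lam))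
    (xs : 𝒮 → ℝ) (ys zs : ι → 𝒮 → ℝ) (rs : ι → ℝ)
    (hxs : ∀ S, 0 ≤ xs S) (hys : ∀ a S, 0 ≤ ys a S) (hzs : ∀ a S, 0 ≤ zs a S)
    (hrs : ∀ a, 0 ≤ rs a)
    (hprob : ∑ a, p a * rs a ≤ ρ)
    (hcov1 : ∀ a, ∀ e ∈ elem a,
      1 ≤ (∑ S ∈ Finset.univ.filter (fun S => e ∈ Sset S), (xs S + ys a S)) + rs a)
    (hcov2 : ∀ a, ∀ e ∈ elem a,
      1 ≤ ∑ S ∈ Finset.univ.filter (fun S => e ∈ Sset S), (xs S + ys a S + zs a S))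
    (hbud : ∀ a, ∑ S, wA a S * ys a S ≤ B) :
    let x' : 𝒮 → ℝ := fun _ => 0
    let y' : ι → 𝒮 → ℝ := fun _ _ => 0
    let z' : ι → 𝒮 → ℝ := fun a S => if elem a = ∅ then 0 else zs a S + ys a S + xs S
    let r' : ι → ℝ := fun a => if elem a = ∅ then 0 else 1
    (∀ S, 0 ≤ x' S) ∧ (∀ a S, 0 ≤ y' a S) ∧ (∀ a S, 0 ≤ z' a S) ∧ (∀ a, 0 ≤ r' a) ∧
    (∑ a, p a * r' a ≤ ρ) ∧
    (∀ a, ∀ e ∈ elem a,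
      1 ≤ (∑ S ∈ Finset.univ.filter (fun S => e ∈ Sset S), (x' S + y' a S)) + r' a) ∧
    (∀ a, ∀ e ∈ elem a,
      1 ≤ ∑ S ∈ Finset.univ.filter (fun S => e ∈ Sset S), (x' S + y' a S + z' a S)) ∧
    (∀ a, ∑ S, wA a S * y' a S ≤ B) ∧
    ((∑ S, wI S * x' S) + ∑ a, p a * ∑ S, wA a S * (y' a S + z' a S) ≤
      (∑ S, wI S * xs S) + ∑ a, p a * ∑ S, wA a S * (ys a S + zs a S)) :=
  stmt14_general Sset elem p hp0 wI wA hwI hwA lam B ρ hlam hB hlw hq xs ys zs hxs hys hzs hcov2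
end
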